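/- Let q be a root of unity with q^2 ≠ 1, let ell be the minimal positive integer with q^{2 ell} = 1, and suppose ell divides n - 2p + 1 (i.e. (n,p) is critical). Then the Gram determinant prod_{j=1}^{p} ([n-2p+1+j]_q / [j]_q)^{d_{n,p-j}} is nonzero, where [m]_q = (q^m - q^{-m})/(q - q^{-1}) and d_{n,p} = binom(n,p) - binom(n,p-1); more precisely each factor [m ell + j]_q/[j]_q is nonzero because the zeros of numerator and denominator at j a multiple of ell cancel (using [m ell]_q = [ell]_q [m]_{q^ell}). -/

import Mathlib

/-!
Since `q²` is a primitive `ℓ`-th root of unity, `[m]_q = 0` exactly when `ℓ ∣ m`. For a critical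
pair, `ℓ ∣ n - 2p + 1 + j` iff `ℓ ∣ j`, so away from multiples of `ℓ` neither `[n - 2p + 1 + j]_q`
nor `[j]_q` vanishes. At multiples of `ℓ` the factor is computed with `q^ℓ = ±1`, and
`[k]_{±1} = k (±1)^{k-1}` vanishes only at `k = 0`.
-/

open scoped Classical

/-- The `q`-number `[m]_x = (x^m - x^{-m})/(x - x⁻¹)`, with `[m]_x = m x^{m-1}`
when `x = ±1`. -/
noncomputable def qnum (x : ℂ) (m : ℤ) : ℂ :=
  if x = 1 ∨ x = -1 then (m : ℂ) * x ^ (m - 1)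
  else (x ^ m - x ^ (-m)) / (x - x⁻¹)

/-- `d_{n,p} = binom(n,p) - binom(n,p-1)`, with `binom(n,-1) = 0`. -/
def dd (n k : ℕ) : ℕ := n.choose k - (if k = 0 then 0 else n.choose (k - 1))

theorem qnum_ne_zero_of_sq_eq_one {x : ℂ} {m : ℤ} (hx : x ^ 2 = 1) (hm : m ≠ 0) :
    qnum x m ≠ 0 := by
  have hx' : x = 1 ∨ x = -1 := sq_eq_one_iff.1 hx
  rw [qnum, if_pos hx']
  have hx0 : x ≠ 0 := by rcases hx' with rfl | rfl <;> norm_num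
  exact mul_ne_zero (Int.cast_ne_zero.2 hm) (zpow_ne_zero _ hx0)

theorem qnum_ne_zero_of_sq_zpow_ne_one {x : ℂ} {m : ℤ} (hx : x ≠ 0) (hm : (x ^ 2) ^ m ≠ 1) :
    qnum x m ≠ 0 := by
  have hx2 : x ^ 2 ≠ 1 := fun h => hm (by rw [h, one_zpow])
  rw [qnum, if_neg (mt sq_eq_one_iff.2 hx2)]
  refine div_ne_zero (sub_ne_zero.2 fun h => hm ?_) (sub_ne_zero.2 fun h => hx2 ?_)
  · rw [sq, mul_zpow]
    nth_rewrite 2 [h]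
    rw [← zpow_add₀ hx, add_neg_cancel, zpow_zero]
  · rw [sq]
    nth_rewrite 2 [h]
    exact mul_inv_cancel₀ hx

theorem stmt_9_general (q : ℂ) (hq : q ≠ 0) (ℓ n p : ℕ)
    (hℓpos : 0 < ℓ) (hℓ : q ^ (2 * ℓ) = 1)
    (hmin : ∀ k : ℕ, 0 < k → q ^ (2 * k) = 1 → ℓ ≤ k)
    (hnp : 2 * p ≤ n) (hdiv : (ℓ : ℤ) ∣ ((n : ℤ) - 2 * p + 1)) :
    (∏ j ∈ Finset.Icc 1 p,
      (if (ℓ : ℤ) ∣ (j : ℤ) then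
          qnum (q ^ ℓ) (((n : ℤ) - 2 * p + 1 + (j : ℤ)) / (ℓ : ℤ)) /
            qnum (q ^ ℓ) ((j : ℤ) / (ℓ : ℤ))
        else qnum q ((n : ℤ) - 2 * p + 1 + (j : ℤ)) / qnum q (j : ℤ)) ^ (dd n (p - j))) ≠ 0 := by
  have hprim : IsPrimitiveRoot (q ^ 2) ℓ :=
    .mk_of_lt _ hℓpos (by rwa [← pow_mul]) fun k hk hkℓ hk1 =>
      (hmin k hk (by rwa [pow_mul])).not_gt hkℓ
  have hqℓ : (q ^ ℓ) ^ 2 = 1 := by rw [← pow_mul, mul_comm, hℓ]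
  refine Finset.prod_ne_zero_iff.2 fun j hj => pow_ne_zero _ ?_
  have hj : (0 : ℤ) < j := by rw [Finset.mem_Icc] at hj; omega
  have hNj : (0 : ℤ) < n - 2 * p + 1 + j := by omega
  split_ifs with hℓj
  · have hℓ0 : (0 : ℤ) ≤ ℓ := by omega
    exact div_ne_zero
      (qnum_ne_zero_of_sq_eq_one hqℓ (Int.ediv_pos_of_pos_of_dvd hNj hℓ0 (dvd_add hdiv hℓj)).ne')
      (qnum_ne_zero_of_sq_eq_one hqℓ (Int.ediv_pos_of_pos_of_dvd hj hℓ0 hℓj).ne')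
  · have hℓNj : ¬ (ℓ : ℤ) ∣ n - 2 * p + 1 + j := fun h => hℓj (by simpa using dvd_sub h hdiv)
    exact div_ne_zero
      (qnum_ne_zero_of_sq_zpow_ne_one hq (mt (hprim.zpow_eq_one_iff_dvd _).1 hℓNj))
      (qnum_ne_zero_of_sq_zpow_ne_one hq (mt (hprim.zpow_eq_one_iff_dvd _).1 hℓj))

/-- Let `q` be a root of unity with `q² ≠ 1`, `ℓ` minimal positive with
`q^(2ℓ) = 1`, and suppose `ℓ ∣ n - 2p + 1` (`(n,p)` critical).  Then the Gram
determinant `∏_{j=1}^p ([n-2p+1+j]/[j])^{d_{n,p-j}}` is nonzero, the factors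
with `ℓ ∣ j` being interpreted via the cancellation
`[mℓ]_q = [ℓ]_q [m]_{q^ℓ}` of the simple zeros of numerator and denominator. -/
theorem stmt_9 (q : ℂ) (hq : q ≠ 0) (hq2 : q ^ 2 ≠ 1) (ℓ n p : ℕ)
    (hℓpos : 0 < ℓ) (hℓ : q ^ (2 * ℓ) = 1)
    (hmin : ∀ k : ℕ, 0 < k → q ^ (2 * k) = 1 → ℓ ≤ k)
    (hnp : 2 * p ≤ n) (hdiv : (ℓ : ℤ) ∣ ((n : ℤ) - 2 * p + 1)) :
    (∏ j ∈ Finset.Icc 1 p,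
      (if (ℓ : ℤ) ∣ (j : ℤ) then
          qnum (q ^ ℓ) (((n : ℤ) - 2 * p + 1 + (j : ℤ)) / (ℓ : ℤ)) /
            qnum (q ^ ℓ) ((j : ℤ) / (ℓ : ℤ))
        else qnum q ((n : ℤ) - 2 * p + 1 + (j : ℤ)) / qnum q (j : ℤ)) ^ (dd n (p - j))) ≠ 0 :=
  stmt_9_general q hq ℓ n p hℓpos hℓ hmin hnp hdiv
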